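/- Let C ⊆ F_2^n be a neural code. Then {f^p : f ∈ CF(J_C)} = CF(J_{C^[p]}), and CF(J_{C^[p]}) ⊆ CF(J_{C^p}). -/

import Mathlib

open MvPolynomial

/-- The field with two elements. -/
abbrev F2 := ZMod 2

/-- A motif indexed by `ι`: at each index it is `0`, `1`, or `*` (represented by `none`). -/
abbrev Motif (ι : Type*) := ι → Option F2

/-- The partial order on motifs: `a ≤ b` iff `a i = b i` for every index `i` with `b i ≠ *`. -/
def MotifLE {ι : Type*} (a b : Motif ι) : Prop :=
  ∀ (i : ι) (x : F2), b i = some x → a i = some x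

/-- The variety of a motif: all words agreeing with the motif on its non-`*` coordinates. -/
def variety {ι : Type*} (a : Motif ι) : Set (ι → F2) :=
  {w | ∀ (i : ι) (x : F2), a i = some x → w i = x}

/-- `a` is a motif of the code `C` iff its variety is contained in `C`. -/
def IsMotifOf {ι : Type*} (C : Set (ι → F2)) (a : Motif ι) : Prop :=
  variety a ⊆ C

/-- The set of maximal motifs of a code `C`. -/
def maxMot {ι : Type*} (C : Set (ι → F2)) : Set (Motif ι) :=
  {a | IsMotifOf C a ∧ ∀ b : Motif ι, IsMotifOf C b → MotifLE a b → a = b}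

/-- Two motifs are disjoint if at some index both are non-`*` and they differ. -/
def DisjointMotifs {ι : Type*} (a b : Motif ι) : Prop :=
  ∃ (i : ι) (x : F2), a i = some x ∧ b i = some (1 - x)

/-- Polarization of a motif of length `n`, as a motif of length `2n`
(indexed by `Fin n ⊕ Fin n`; `Sum.inl i` is coordinate `i`, `Sum.inr i` is coordinate `n+i`). -/
def polMotif {n : ℕ} (a : Motif (Fin n)) : Motif (Fin n ⊕ Fin n)
  | Sum.inl i => if a i = some 0 then some 0 else none
  | Sum.inr i => if a i = some 1 then some 0 else none

/-- The bar of a motif: `0 ↦ 1`, `1 ↦ 0`, `* ↦ *`. -/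
def barMotif {ι : Type*} (a : Motif ι) : Motif ι :=
  fun i => (a i).map (fun x => 1 - x)

/-- The polarization of a code `C ⊆ F₂ⁿ`: the union of the varieties of the
polarizations of the maximal motifs of `C`. -/
def polCode {n : ℕ} (C : Set (Fin n → F2)) : Set ((Fin n ⊕ Fin n) → F2) :=
  ⋃ a ∈ maxMot C, variety (polMotif a)

/-- The code `over-over-D-p` : the union of the varieties of `bar (pol (bar b))`
over the maximal motifs `b` of `D`. -/
def barPolBarCode {n : ℕ} (D : Set (Fin n → F2)) : Set ((Fin n ⊕ Fin n) → F2) :=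
  ⋃ b ∈ maxMot D, variety (barMotif (polMotif (barMotif b)))

/-- The formal polarization of a code `C`: the complement of `barPolBarCode` of `Cᶜ`. -/
def formalPol {n : ℕ} (C : Set (Fin n → F2)) : Set ((Fin n ⊕ Fin n) → F2) :=
  (barPolBarCode Cᶜ)ᶜ

/-- The Lagrange polynomial of a motif. -/
noncomputable def lagrange {ι : Type*} [Fintype ι] (a : Motif ι) : MvPolynomial ι F2 :=
  (∏ i ∈ Finset.univ.filter (fun i => a i = some 1), X i) *
    ∏ j ∈ Finset.univ.filter (fun j => a j = some 0), (1 - X j)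

/-- The motif (with no stars) corresponding to a word. -/
def wordMotif {ι : Type*} (w : ι → F2) : Motif ι := fun i => some (w i)

/-- The neural ideal of a code: generated by the Lagrange polynomials of the
words in the complement of the code. -/
noncomputable def neuralIdeal {ι : Type*} [Fintype ι] (C : Set (ι → F2)) :
    Ideal (MvPolynomial ι F2) :=
  Ideal.span ((fun w => lagrange (wordMotif w)) '' Cᶜ)

/-- The pseudo-monomial `∏_{i ∈ σ} X i * ∏_{j ∈ τ} (1 - X j)`. -/
noncomputable def pm {ι : Type*} (σ τ : Finset ι) : MvPolynomial ι F2 :=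
  (∏ i ∈ σ, X i) * ∏ j ∈ τ, (1 - X j)

/-- A polynomial is a pseudo-monomial if it equals `pm σ τ` for disjoint `σ τ`. -/
def IsPseudoMonomial {ι : Type*} (f : MvPolynomial ι F2) : Prop :=
  ∃ σ τ : Finset ι, Disjoint σ τ ∧ f = pm σ τ

/-- The canonical form of an ideal: the set of its minimal pseudo-monomials, i.e.
pseudo-monomials `f ∈ I` such that no pseudo-monomial `g ∈ I` of strictly smaller
degree divides `f`. -/
def CF {ι : Type*} (I : Ideal (MvPolynomial ι F2)) : Set (MvPolynomial ι F2) :=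
  {f | IsPseudoMonomial f ∧ f ∈ I ∧
    ¬ ∃ g : MvPolynomial ι F2, IsPseudoMonomial g ∧ g ∈ I ∧
      g.totalDegree < f.totalDegree ∧ g ∣ f}

/-- The polarization of the pseudo-monomial with data `(σ, τ)`:
`∏_{i ∈ σ} X i * ∏_{j ∈ τ} Y j` (here `Y j = X (Sum.inr j)`). -/
noncomputable def ppm {n : ℕ} (σ τ : Finset (Fin n)) : MvPolynomial (Fin n ⊕ Fin n) F2 :=
  (∏ i ∈ σ, X (Sum.inl i)) * ∏ j ∈ τ, X (Sum.inr j)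

/-- `g` is the polarization of the pseudo-monomial `f`. -/
def PolPM {n : ℕ} (f : MvPolynomial (Fin n) F2) (g : MvPolynomial (Fin n ⊕ Fin n) F2) : Prop :=
  ∃ σ τ : Finset (Fin n), Disjoint σ τ ∧ f = pm σ τ ∧ g = ppm σ τ

/-- The set of polarizations of the elements of a set of pseudo-monomials. -/
def polSet {n : ℕ} (S : Set (MvPolynomial (Fin n) F2)) :
    Set (MvPolynomial (Fin n ⊕ Fin n) F2) :=
  {g | ∃ f ∈ S, PolPM f g}

/-- The prime ideal of a motif: generated by `X i` for `a i = 0`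
and `1 - X j` for `a j = 1`. -/
noncomputable def pIdeal {ι : Type*} (a : Motif ι) : Ideal (MvPolynomial ι F2) :=
  Ideal.span ({f | ∃ i, a i = some 0 ∧ f = X i} ∪ {f | ∃ j, a j = some 1 ∧ f = 1 - X j})

/-!
Pseudo-monomials are exactly the Lagrange polynomials `L_a` of motifs `a`. Evaluating at words
shows `L_b ∣ L_a ↔ a ≤ b` and `L_a ∈ J_C ↔ V_a ⊆ ᶜC`, and the degree drops strictly along a proper
`a ≤ b`; hence `CF(J_C) = {L_a : a ∈ MaxMot(ᶜC)}`. The polarization of `L_b` is `L_{φ b}` for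
`φ b = bar (pol (bar b))`, the motif that is `1` at `X_i` where `b_i = 1`, at `Y_i` where
`b_i = 0`, and `*` elsewhere. The complement of `C^[p]` is the union of the `V_{φ b}` over
`b ∈ MaxMot(ᶜC)`, and its maximal motifs are exactly these `φ b`, since `φ` reflects `≤`. They are
also maximal motifs of `ᶜ(C^p)`: `V_{φ b}` meets `V_{a^p}` iff `V_b` meets `V_a`, and every motif
above `φ b` is some `φ b'` with `b ≤ b'`.
-/

lemma F2.eq_one_sub_iff_ne {x y : F2} : y = 1 - x ↔ y ≠ x := by
  revert x y; decide

lemma F2.eq_zero_or_eq_one (x : F2) : x = 0 ∨ x = 1 := by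
  revert x; decide

section Motifs

variable {ι : Type*}

lemma motifLE_antisymm {a b : Motif ι} (hab : MotifLE a b) (hba : MotifLE b a) : a = b := by
  funext i
  cases hb : b i with
  | some x => exact hab i x hb
  | none =>
    cases ha : a i with
    | none => rfl
    | some x => simpa [hb] using hba i x ha

lemma variety_nonempty (a : Motif ι) : (variety a).Nonempty :=
  ⟨fun i => (a i).getD 0, fun i x h => by simp [h]⟩

lemma variety_wordMotif (w : ι → F2) : variety (wordMotif w) = {w} := by
  ext v
  refine ⟨fun hv => funext fun i => hv i (w i) rfl, ?_⟩
  rintro rfl i x hx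
  exact Option.some_injective _ hx

lemma eq_wordMotif_of_mem_variety {a : Motif ι} {w : ι → F2} (ha : ∀ i, a i ≠ none)
    (hw : w ∈ variety a) : a = wordMotif w := by
  funext i
  obtain ⟨x, hx⟩ := Option.ne_none_iff_exists'.1 (ha i)
  rw [hx, wordMotif, hw i x hx]

lemma motifLE_update_of_eq_none [DecidableEq ι] {a : Motif ι} {i : ι} (h : a i = none)
    (v : Option F2) : MotifLE (Function.update a i v) a := fun j y hj => by
  have hji : j ≠ i := by rintro rfl; simp [h] at hj
  rwa [Function.update_of_ne hji]

lemma variety_subset_variety_iff {a b : Motif ι} : variety a ⊆ variety b ↔ MotifLE a b := by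
  classical
  refine ⟨fun h i x hb => ?_, fun h w hw i x hb => hw i x (h i x hb)⟩
  by_contra hne
  obtain ⟨w, hw⟩ := variety_nonempty a
  -- flipping coordinate `i` keeps the word in `variety a` but moves it out of `variety b`
  have hflip : Function.update w i (1 - x) ∈ variety a := by
    intro j y hj
    rcases eq_or_ne j i with rfl | hji
    · rw [Function.update_self, eq_comm, F2.eq_one_sub_iff_ne]
      rintro rfl
      exact hne hj
    · rw [Function.update_of_ne hji]
      exact hw j y hj
  have hx := h hflip i x hb
  rw [Function.update_self] at hx
  exact (F2.eq_one_sub_iff_ne.1 hx.symm) rfl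

lemma disjoint_variety_iff {a b : Motif ι} :
    Disjoint (variety a) (variety b) ↔ DisjointMotifs a b := by
  refine ⟨fun h => ?_, fun ⟨i, x, ha, hb⟩ => Set.disjoint_left.2 fun w hwa hwb => ?_⟩
  · by_contra hab
    have hwa : (fun i => (a i).getD ((b i).getD 0)) ∈ variety a := fun i x hx => by simp [hx]
    refine Set.disjoint_left.1 h hwa fun i y hy => ?_
    cases ha : a i with
    | none => simp [hy]
    | some x =>
      simp only [Option.getD_some]
      by_contra hxy
      exact hab ⟨i, x, ha, hy ▸ congrArg some (F2.eq_one_sub_iff_ne.2 (Ne.symm hxy))⟩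
  · have hwi := hwb i _ hb
    rw [hwa i x ha] at hwi
    exact F2.eq_one_sub_iff_ne.1 hwi rfl

lemma exists_le_maxMot [Finite ι] {C : Set (ι → F2)} {a : Motif ι} (ha : IsMotifOf C a) :
    ∃ b ∈ maxMot C, MotifLE a b := by
  obtain ⟨V, haV, hV⟩ := Finite.exists_le_maximal
    (p := fun V : Set (ι → F2) => ∃ b, IsMotifOf C b ∧ V = variety b) ⟨a, ha, rfl⟩
  obtain ⟨b, hb, rfl⟩ := hV.prop
  refine ⟨b, ⟨hb, fun c hc hbc => ?_⟩, variety_subset_variety_iff.1 haV⟩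
  have hcb := hV.2 ⟨c, hc, rfl⟩ (variety_subset_variety_iff.2 hbc)
  exact motifLE_antisymm hbc (variety_subset_variety_iff.1 hcb)

lemma isMotifOf_compl_iff [Finite ι] {C : Set (ι → F2)} {b : Motif ι} :
    IsMotifOf Cᶜ b ↔ ∀ a ∈ maxMot C, DisjointMotifs b a := by
  refine ⟨fun hb a ha => disjoint_variety_iff.1 ?_, fun h w hwb hwC => ?_⟩
  · exact disjoint_compl_left.mono hb ha.1
  · obtain ⟨a, ha, hwa⟩ := exists_le_maxMot (C := C) (a := wordMotif w)
      (by rw [IsMotifOf, variety_wordMotif]; simpa using hwC)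
    have hw : w ∈ variety a := variety_subset_variety_iff.2 hwa (by simp [variety_wordMotif])
    exact Set.disjoint_left.1 (disjoint_variety_iff.2 (h a ha)) hwb hw

lemma maxMot_eq_of_forall_le {C : Set (ι → F2)} {M : Set (Motif ι)}
    (hM : ∀ m ∈ M, IsMotifOf C m) (hanti : ∀ m ∈ M, ∀ m' ∈ M, MotifLE m m' → m = m')
    (hdom : ∀ c, IsMotifOf C c → ∃ m ∈ M, MotifLE c m) : maxMot C = M := by
  ext c
  refine ⟨fun ⟨hc, hmax⟩ => ?_, fun hcM => ⟨hM c hcM, fun d hd hcd => ?_⟩⟩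
  · obtain ⟨m, hm, hcm⟩ := hdom c hc
    exact hmax m (hM m hm) hcm ▸ hm
  · obtain ⟨m, hm, hdm⟩ := hdom d hd
    have hcm : c = m := hanti c hcM m hm fun i x h => hcd i x (hdm i x h)
    subst hcm
    exact motifLE_antisymm hcd hdm

end Motifs

section Lagrange

variable {ι : Type*}

def lagrangeFactor {R : Type*} [CommRing R] (o : Option F2) (x : R) : R :=
  (if o = some 1 then x else 1) * (if o = some 0 then 1 - x else 1)

@[simp]
lemma lagrangeFactor_none {R : Type*} [CommRing R] (x : R) : lagrangeFactor none x = 1 := by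
  simp [lagrangeFactor]

@[simp]
lemma lagrangeFactor_some_zero {R : Type*} [CommRing R] (x : R) :
    lagrangeFactor (some 0) x = 1 - x := by
  simp [lagrangeFactor]

@[simp]
lemma lagrangeFactor_some_one {R : Type*} [CommRing R] (x : R) :
    lagrangeFactor (some 1) x = x := by
  simp [lagrangeFactor]

lemma lagrangeFactor_eq_ite (o : Option F2) (y : F2) :
    lagrangeFactor o y = if ∀ x, o = some x → y = x then 1 else 0 := by
  revert o y; decide

variable [Fintype ι]

lemma lagrange_eq_prod (a : Motif ι) : lagrange a = ∏ i, lagrangeFactor (a i) (X i) := by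
  rw [lagrange, Finset.prod_filter, Finset.prod_filter, ← Finset.prod_mul_distrib]
  rfl

lemma eval_lagrange (w : ι → F2) (a : Motif ι) :
    eval w (lagrange a) = (variety a).indicator 1 w := by
  classical
  have heval : ∀ i, eval w (lagrangeFactor (a i) (X i)) = lagrangeFactor (a i) (w i) := by
    simp [lagrangeFactor, apply_ite (eval w)]
  simp only [lagrange_eq_prod, map_prod, heval, lagrangeFactor_eq_ite, Fintype.prod_boole,
    Set.indicator_apply, Pi.one_apply]
  exact if_congr Iff.rfl rfl rfl

lemma lagrange_ne_zero (a : Motif ι) : lagrange a ≠ 0 := by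
  obtain ⟨w, hw⟩ := variety_nonempty a
  intro h
  have := eval_lagrange w a
  rw [h, map_zero, Set.indicator_of_mem hw] at this
  exact zero_ne_one this

lemma lagrange_dvd_lagrange_iff {a b : Motif ι} : lagrange b ∣ lagrange a ↔ MotifLE a b := by
  refine ⟨fun ⟨q, hq⟩ => variety_subset_variety_iff.1 fun w hwa => ?_, fun h => ?_⟩
  · by_contra hwb
    have := congrArg (eval w) hq
    rw [map_mul, eval_lagrange, eval_lagrange, Set.indicator_of_mem hwa,
      Set.indicator_of_notMem hwb, zero_mul] at this
    exact one_ne_zero this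
  · rw [lagrange_eq_prod, lagrange_eq_prod]
    refine Finset.prod_dvd_prod_of_dvd _ _ fun i _ => ?_
    cases hb : b i with
    | none => simp
    | some x => rw [h i x hb]

lemma lagrange_injective : Function.Injective (lagrange : Motif ι → MvPolynomial ι F2) :=
  fun _ _ h => motifLE_antisymm (lagrange_dvd_lagrange_iff.1 (h ▸ dvd_rfl))
    (lagrange_dvd_lagrange_iff.1 (h ▸ dvd_rfl))

lemma totalDegree_lagrange_lt {a b : Motif ι} (hab : MotifLE a b) (hne : a ≠ b) :
    (lagrange b).totalDegree < (lagrange a).totalDegree := by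
  obtain ⟨q, hq⟩ := lagrange_dvd_lagrange_iff.2 hab
  have hq0 : q ≠ 0 := by
    rintro rfl
    exact lagrange_ne_zero a (by simpa using hq)
  rw [hq, totalDegree_mul_of_isDomain (lagrange_ne_zero b) hq0, Nat.lt_add_right_iff_pos,
    Nat.pos_iff_ne_zero, Ne, totalDegree_eq_zero_iff_eq_C]
  intro hqC
  -- a constant `q` is killed by evaluating at a word of `variety b` outside `variety a`
  obtain ⟨w, hwb, hwa⟩ := Set.not_subset.1 fun h =>
    hne (motifLE_antisymm hab (variety_subset_variety_iff.1 h))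
  have := congrArg (eval w) hq
  rw [map_mul, eval_lagrange, eval_lagrange, Set.indicator_of_mem hwb,
    Set.indicator_of_notMem hwa, hqC, eval_C, Pi.one_apply, one_mul] at this
  exact hq0 (by rw [hqC, ← this, map_zero])

lemma lagrange_update [DecidableEq ι] (a : Motif ι) (i : ι) (v : Option F2) :
    lagrange (Function.update a i v) =
      lagrangeFactor v (X i) * ∏ j ∈ Finset.univ \ {i}, lagrangeFactor (a j) (X j) := by
  rw [lagrange_eq_prod, ← Finset.prod_update_of_mem (Finset.mem_univ i)]
  exact Finset.prod_congr rfl fun j _ =>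
    Function.apply_update (fun j o => lagrangeFactor o (X j : MvPolynomial ι F2)) a i v j

lemma lagrange_eq_add_update [DecidableEq ι] {a : Motif ι} {i : ι} (h : a i = none) :
    lagrange a = lagrange (Function.update a i (some 0)) +
      lagrange (Function.update a i (some 1)) := by
  calc lagrange a = lagrange (Function.update a i none) := by rw [← h, Function.update_eq_self]
    _ = _ := by
      simp only [lagrange_update, lagrangeFactor_none, lagrangeFactor_some_zero,
        lagrangeFactor_some_one]
      ring

lemma neuralIdeal_le_ker_eval {C : Set (ι → F2)} {w : ι → F2} (hw : w ∈ C) :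
    neuralIdeal C ≤ RingHom.ker (eval w) := by
  rw [neuralIdeal, Ideal.span_le]
  rintro _ ⟨u, hu, rfl⟩
  rw [SetLike.mem_coe, RingHom.mem_ker, eval_lagrange, variety_wordMotif]
  exact Set.indicator_of_notMem (fun hwu => hu (by rwa [← Set.mem_singleton_iff.1 hwu])) _

lemma lagrange_mem_neuralIdeal {C : Set (ι → F2)} {a : Motif ι} (ha : IsMotifOf Cᶜ a) :
    lagrange a ∈ neuralIdeal C := by
  classical
  suffices ∀ s : Finset ι, ∀ a : Motif ι, (∀ i, a i = none → i ∈ s) → IsMotifOf Cᶜ a →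
      lagrange a ∈ neuralIdeal C from this Finset.univ a (fun i _ => Finset.mem_univ i) ha
  intro s
  induction s using Finset.induction_on with
  | empty =>
    intro a hs ha
    obtain ⟨w, hw⟩ := variety_nonempty a
    rw [eq_wordMotif_of_mem_variety (fun i hi => by simpa using hs i hi) hw]
    exact Ideal.subset_span ⟨w, ha hw, rfl⟩
  | insert i s _ ih =>
    intro a hs ha
    by_cases hi : a i = none
    · have hupdate : ∀ x : F2, lagrange (Function.update a i (some x)) ∈ neuralIdeal C := by
        intro x
        refine ih _ (fun j hj => ?_)
          ((variety_subset_variety_iff.2 (motifLE_update_of_eq_none hi _)).trans ha)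
        have hji : j ≠ i := by rintro rfl; simp at hj
        rw [Function.update_of_ne hji] at hj
        exact (Finset.mem_insert.1 (hs j hj)).resolve_left hji
      rw [lagrange_eq_add_update hi]
      exact add_mem (hupdate 0) (hupdate 1)
    · exact ih a (fun j hj => (Finset.mem_insert.1 (hs j hj)).resolve_left
        (by rintro rfl; exact hi hj)) ha

lemma lagrange_mem_neuralIdeal_iff {C : Set (ι → F2)} {a : Motif ι} :
    lagrange a ∈ neuralIdeal C ↔ IsMotifOf Cᶜ a := by
  refine ⟨fun h w hw hwC => ?_, lagrange_mem_neuralIdeal⟩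
  have := neuralIdeal_le_ker_eval hwC h
  rw [RingHom.mem_ker, eval_lagrange, Set.indicator_of_mem hw] at this
  exact one_ne_zero this

end Lagrange

section CanonicalForm

variable {ι : Type*}

def motifOf [DecidableEq ι] (σ τ : Finset ι) : Motif ι :=
  fun i => if i ∈ σ then some 1 else if i ∈ τ then some 0 else none

variable [Fintype ι]

lemma filter_motifOf_eq_some_one [DecidableEq ι] (σ τ : Finset ι) :
    Finset.univ.filter (fun i => motifOf σ τ i = some 1) = σ := by
  ext i
  by_cases hσ : i ∈ σ <;> simp [motifOf, hσ]

lemma filter_motifOf_eq_some_zero [DecidableEq ι] {σ τ : Finset ι} (hd : Disjoint σ τ) :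
    Finset.univ.filter (fun i => motifOf σ τ i = some 0) = τ := by
  ext i
  rw [Finset.mem_filter, motifOf]
  by_cases hσ : i ∈ σ
  · simp [hσ, Finset.disjoint_left.1 hd hσ]
  · by_cases hτ : i ∈ τ <;> simp [hσ, hτ]

lemma disjoint_filter_eq_some_one_zero (a : Motif ι) :
    Disjoint (Finset.univ.filter fun i => a i = some 1)
      (Finset.univ.filter fun i => a i = some 0) :=
  Finset.disjoint_filter.2 fun i _ h1 h0 => by simp [h1] at h0

lemma lagrange_motifOf [DecidableEq ι] {σ τ : Finset ι} (hd : Disjoint σ τ) :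
    lagrange (motifOf σ τ) = pm σ τ := by
  rw [lagrange, filter_motifOf_eq_some_one, filter_motifOf_eq_some_zero hd, pm]

lemma isPseudoMonomial_iff_mem_range {f : MvPolynomial ι F2} :
    IsPseudoMonomial f ↔ f ∈ Set.range lagrange := by
  classical
  refine ⟨fun ⟨σ, τ, hd, hf⟩ => ⟨motifOf σ τ, hf ▸ lagrange_motifOf hd⟩, ?_⟩
  rintro ⟨a, rfl⟩
  exact ⟨_, _, disjoint_filter_eq_some_one_zero a, rfl⟩

theorem CF_neuralIdeal (C : Set (ι → F2)) : CF (neuralIdeal C) = lagrange '' maxMot Cᶜ := by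
  ext f
  simp only [CF, isPseudoMonomial_iff_mem_range]
  constructor
  · rintro ⟨⟨a, rfl⟩, ha, hmin⟩
    refine ⟨a, ⟨lagrange_mem_neuralIdeal_iff.1 ha, fun b hb hab => ?_⟩, rfl⟩
    by_contra hne
    exact hmin ⟨lagrange b, ⟨b, rfl⟩, lagrange_mem_neuralIdeal_iff.2 hb,
      totalDegree_lagrange_lt hab hne, lagrange_dvd_lagrange_iff.2 hab⟩
  · rintro ⟨a, ⟨ha, hmax⟩, rfl⟩
    refine ⟨⟨a, rfl⟩, lagrange_mem_neuralIdeal_iff.2 ha, ?_⟩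
    rintro ⟨_, ⟨b, rfl⟩, hb, hlt, hdvd⟩
    rw [hmax b (lagrange_mem_neuralIdeal_iff.1 hb) (lagrange_dvd_lagrange_iff.1 hdvd)] at hlt
    exact lt_irrefl _ hlt

end CanonicalForm

section OneWord

variable {ι : Type*}

def oneWord (c : Motif ι) : ι → F2 := fun p => if c p = some 1 then 1 else 0

lemma oneWord_mem_variety (c : Motif ι) : oneWord c ∈ variety c := by
  have key : ∀ x : F2, (if some x = some (1 : F2) then (1 : F2) else 0) = x := by decide
  intro p x hp
  rw [oneWord, hp, key]

lemma motifLE_of_oneWord_mem {c d : Motif ι} (hd : ∀ p x, d p = some x → x = 1)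
    (h : oneWord c ∈ variety d) : MotifLE c d := by
  intro p x hdp
  obtain rfl := hd p x hdp
  by_contra hc
  simpa [oneWord, hc] using h p 1 hdp

end OneWord

section Polarization

variable {n : ℕ}

def barPolBar (b : Motif (Fin n)) : Motif (Fin n ⊕ Fin n) :=
  barMotif (polMotif (barMotif b))

@[simp]
lemma barPolBar_inl (b : Motif (Fin n)) (i : Fin n) :
    barPolBar b (Sum.inl i) = if b i = some 1 then some 1 else none := by
  have key : ∀ o : Option F2, Option.map (fun x : F2 => 1 - x)
      (if Option.map (fun x : F2 => 1 - x) o = some 0 then some 0 else none) =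
      if o = some 1 then some 1 else none := by decide
  exact key (b i)

@[simp]
lemma barPolBar_inr (b : Motif (Fin n)) (i : Fin n) :
    barPolBar b (Sum.inr i) = if b i = some 0 then some 1 else none := by
  have key : ∀ o : Option F2, Option.map (fun x : F2 => 1 - x)
      (if Option.map (fun x : F2 => 1 - x) o = some 1 then some 0 else none) =
      if o = some 0 then some 1 else none := by decide
  exact key (b i)

lemma eq_one_of_barPolBar_eq_some {b : Motif (Fin n)} {p : Fin n ⊕ Fin n} {x : F2}
    (h : barPolBar b p = some x) : x = 1 := by
  cases p <;> simp only [barPolBar_inl, barPolBar_inr] at h <;> split_ifs at h <;>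
    exact (Option.some_injective _ h).symm

lemma ppm_eq_lagrange_barPolBar (a : Motif (Fin n)) :
    ppm (Finset.univ.filter fun i => a i = some 1) (Finset.univ.filter fun i => a i = some 0) =
      lagrange (barPolBar a) := by
  rw [lagrange_eq_prod, Fintype.prod_sum_type, ppm, Finset.prod_filter, Finset.prod_filter]
  congr 1 <;> refine Finset.prod_congr rfl fun i _ => ?_ <;> split_ifs <;> simp [*]

lemma polPM_lagrange_iff {a : Motif (Fin n)} {g : MvPolynomial (Fin n ⊕ Fin n) F2} :
    PolPM (lagrange a) g ↔ g = lagrange (barPolBar a) := by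
  constructor
  · rintro ⟨σ, τ, hd, hf, rfl⟩
    rw [← lagrange_motifOf hd] at hf
    rw [lagrange_injective hf, ← ppm_eq_lagrange_barPolBar, filter_motifOf_eq_some_one,
      filter_motifOf_eq_some_zero hd]
  · rintro rfl
    exact ⟨_, _, disjoint_filter_eq_some_one_zero a, rfl, (ppm_eq_lagrange_barPolBar a).symm⟩

lemma polSet_image_lagrange (M : Set (Motif (Fin n))) :
    polSet (lagrange '' M) = lagrange '' (barPolBar '' M) := by
  ext g
  constructor
  · rintro ⟨_, ⟨a, ha, rfl⟩, hg⟩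
    exact ⟨barPolBar a, ⟨a, ha, rfl⟩, (polPM_lagrange_iff.1 hg).symm⟩
  · rintro ⟨_, ⟨a, ha, rfl⟩, rfl⟩
    exact ⟨lagrange a, ⟨a, ha, rfl⟩, polPM_lagrange_iff.2 rfl⟩

lemma motifLE_of_barPolBar_le {a b : Motif (Fin n)} (h : MotifLE (barPolBar a) (barPolBar b)) :
    MotifLE a b := by
  intro i x hb
  rcases F2.eq_zero_or_eq_one x with rfl | rfl
  · simpa using h (Sum.inr i) 1 (by simp [hb])
  · simpa using h (Sum.inl i) 1 (by simp [hb])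

theorem maxMot_barPolBarCode (D : Set (Fin n → F2)) :
    maxMot (barPolBarCode D) = barPolBar '' maxMot D := by
  refine maxMot_eq_of_forall_le ?_ ?_ fun c hc => ?_
  · rintro _ ⟨b, hb, rfl⟩
    exact Set.subset_biUnion_of_mem (u := fun b => variety (barPolBar b)) hb
  · rintro _ ⟨b, hb, rfl⟩ _ ⟨b', hb', rfl⟩ h
    rw [hb.2 b' hb'.1 (motifLE_of_barPolBar_le h)]
  · obtain ⟨b, hb, hcb⟩ := Set.mem_iUnion₂.1 (hc (oneWord_mem_variety c))
    exact ⟨_, ⟨b, hb, rfl⟩,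
      motifLE_of_oneWord_mem (fun _ _ => eq_one_of_barPolBar_eq_some) hcb⟩

lemma disjointMotifs_barPolBar_polMotif_iff {a b : Motif (Fin n)} :
    DisjointMotifs (barPolBar b) (polMotif a) ↔ DisjointMotifs b a := by
  constructor
  · rintro ⟨p, x, hb, ha⟩
    obtain rfl := eq_one_of_barPolBar_eq_some hb
    cases p with
    | inl i => exact ⟨i, 1, by simpa using hb, by simpa [polMotif] using ha⟩
    | inr i => exact ⟨i, 0, by simpa using hb, by simpa [polMotif] using ha⟩
  · rintro ⟨i, x, hb, ha⟩
    rcases F2.eq_zero_or_eq_one x with rfl | rfl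
    · exact ⟨Sum.inr i, 1, by simp [hb], by simp [polMotif, ha]⟩
    · exact ⟨Sum.inl i, 1, by simp [hb], by simp [polMotif, ha]⟩

lemma isMotifOf_compl_polCode_iff (C : Set (Fin n → F2)) {b : Motif (Fin n)} :
    IsMotifOf (polCode C)ᶜ (barPolBar b) ↔ IsMotifOf Cᶜ b := by
  rw [isMotifOf_compl_iff (b := b)]
  simp only [IsMotifOf, polCode, Set.subset_compl_iff_disjoint_right, Set.disjoint_iUnion_right,
    disjoint_variety_iff, disjointMotifs_barPolBar_polMotif_iff]

lemma exists_eq_barPolBar_of_barPolBar_le {b : Motif (Fin n)} {c : Motif (Fin n ⊕ Fin n)}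
    (h : MotifLE (barPolBar b) c) : ∃ b', MotifLE b b' ∧ c = barPolBar b' := by
  -- `c` only forgets coordinates of `barPolBar b`; forget in `b` those that `c` forgets twice
  refine ⟨fun i => if c (Sum.inl i) = none ∧ c (Sum.inr i) = none then none else b i,
    fun i x hx => ?_, funext fun p => ?_⟩
  · dsimp only at hx
    split_ifs at hx
    exact hx
  have key : ∀ o o₁ o₂ : Option F2,
      (∀ x, o₁ = some x → (if o = some 1 then some 1 else none) = some x) →
      (∀ x, o₂ = some x → (if o = some 0 then some 1 else none) = some x) →
      o₁ = (if (if o₁ = none ∧ o₂ = none then none else o) = some 1 then some 1 else none) ∧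
      o₂ = (if (if o₁ = none ∧ o₂ = none then none else o) = some 0 then some 1 else none) := by
    decide
  have hi := fun i => key (b i) (c (Sum.inl i)) (c (Sum.inr i))
    (fun x hx => by simpa using h _ x hx) (fun x hx => by simpa using h _ x hx)
  cases p with
  | inl i => simpa using (hi i).1
  | inr i => simpa using (hi i).2

theorem barPolBar_mem_maxMot_compl_polCode {C : Set (Fin n → F2)} {b : Motif (Fin n)}
    (hb : b ∈ maxMot Cᶜ) : barPolBar b ∈ maxMot (polCode C)ᶜ := by
  refine ⟨(isMotifOf_compl_polCode_iff C).2 hb.1, fun c hc hbc => ?_⟩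
  obtain ⟨b', hbb', rfl⟩ := exists_eq_barPolBar_of_barPolBar_le hbc
  rw [hb.2 b' ((isMotifOf_compl_polCode_iff C).1 hc) hbb']

end Polarization

/-- `{fᵖ : f ∈ CF(J_C)} = CF(J_{C^[p]})` and
`CF(J_{C^[p]}) ⊆ CF(J_{Cᵖ})`. -/
theorem polSet_CF_eq_CF_formalPol {n : ℕ} (C : Set (Fin n → F2)) :
    polSet (CF (neuralIdeal C)) = CF (neuralIdeal (formalPol C)) ∧
    CF (neuralIdeal (formalPol C)) ⊆ CF (neuralIdeal (polCode C)) := by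
  rw [CF_neuralIdeal, CF_neuralIdeal, CF_neuralIdeal, polSet_image_lagrange, formalPol,
    compl_compl, maxMot_barPolBarCode]
  exact ⟨rfl, Set.image_mono (Set.image_subset_iff.2 fun _ => barPolBar_mem_maxMot_compl_polCode)⟩
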